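/- arXiv:2110.09709 — 4 statements merged into one kernel-verified Lean document; each statement's English description precedes it below -/
import Mathlib

section
/- If A ∈ M_n(ℂ) is h-cyclic and nonsingular, then h divides n. -/
/-- `A` is `h`-cyclic with respect to the partition of indices given by the block-index
map `f` (vertex `x` lies in block `f x`): every nonzero entry goes from block `ℓ` to
block `ℓ + 1 (mod h)`. -/
def IsHCyclic {n h : ℕ} (A : Matrix (Fin n) (Fin n) ℂ) (f : Fin n → ZMod h) : Prop :=
  ∀ i j, A i j ≠ 0 → f j = f i + 1

/-- If `A ∈ Mₙ(ℂ)` is `h`-cyclic and nonsingular, then `h` divides `n`. -/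
theorem h_dvd_n {n h : ℕ} [NeZero h] (A : Matrix (Fin n) (Fin n) ℂ)
    (f : Fin n → ZMod h) (hA : IsHCyclic A f) (hinv : IsUnit A) : h ∣ n := by
  have hdet : A.det ≠ 0 := (Matrix.isUnit_iff_isUnit_det A).mp hinv |>.ne_zero
  rw [Matrix.det_apply] at hdet
  obtain ⟨σ, -, hσ⟩ := Finset.exists_ne_zero_of_sum_ne_zero hdet
  have hprod : ∀ i, A (σ i) i ≠ 0 := by
    intro i hi
    apply hσ
    have h0 : ∏ j : Fin n, A (σ j) j = 0 := Finset.prod_eq_zero (Finset.mem_univ i) hi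
    rw [h0, smul_zero]
  have key : ∑ i : Fin n, f i = ∑ i : Fin n, f i + n := by
    calc ∑ i : Fin n, f i
        = ∑ i : Fin n, (f (σ i) + 1) := by
          refine Finset.sum_congr rfl fun i _ => ?_
          exact hA (σ i) i (hprod i)
      _ = ∑ i : Fin n, f (σ i) + n := by
          rw [Finset.sum_add_distrib, Finset.sum_const, Finset.card_univ,
            Fintype.card_fin, nsmul_eq_mul, mul_one]
      _ = ∑ i : Fin n, f i + n := by rw [Equiv.sum_comp σ f]
  have : (n : ZMod h) = 0 := by linear_combination key.symm
  exact (ZMod.natCast_eq_zero_iff n h).mp this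
end

section
/- Let A ∈ M_n(ℂ) be h-cyclic in consecutive block form with cyclic block products B_i, and suppose B_i is singular. If x ∈ null(B_i), x ≠ 0, then there exists a positive integer p ≤ h such that B_{ip} x = 0 and B_{iq} x ≠ 0 for all 1 ≤ q < p; moreover, A has a Jordan chain of length p for the eigenvalue 0 (so any Jordan canonical form of A contains a p×p singular Jordan block). -/
open Matrix

/-- The block `A_{ℓ,ℓ+1}` of `A`, zero-padded to full size: entries of `A` from block `ℓ`
to block `ℓ+1`, and `0` elsewhere. -/
noncomputable def blockM {n h : ℕ} (A : Matrix (Fin n) (Fin n) ℂ) (f : Fin n → ZMod h) (ℓ : ZMod h) :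
    Matrix (Fin n) (Fin n) ℂ :=
  Matrix.of fun x y => if f x = ℓ ∧ f y = ℓ + 1 then A x y else 0

/-- The partial cyclic product `B_{ip} = A_{i-p,i-p+1} A_{i-p+1,i-p+2} ⋯ A_{i-1,i}`
(indices mod `h`), i.e. `∏_{j=h+1-p}^{h} A_{α^{j-1}(i), α^{j}(i)}` where `α(i) = i+1 mod h`;
each factor is zero-padded to full size.  `B_i := B_{ih}` is the cyclic block product. -/
noncomputable def Bprod {n h : ℕ} (A : Matrix (Fin n) (Fin n) ℂ) (f : Fin n → ZMod h) (i : ZMod h)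
    (p : ℕ) : Matrix (Fin n) (Fin n) ℂ :=
  ((List.range p).map fun j => blockM A f (i - (p : ZMod h) + (j : ZMod h))).prod

/-!
On a vector `v` supported on block `i`, the cyclic structure of `A` makes `A` act on
`B_{iq} v` (supported on block `i - q`) exactly as the next factor `A_{i-q-1,i-q}` does,
so `B_{iq} v = A^q v`. If `p` is the least index with `A^p v = 0`, the vectors
`A^{p-1} v, …, A v, v` form a Jordan chain of `A` for the eigenvalue `0`.
-/

section

variable {n h : ℕ} (A : Matrix (Fin n) (Fin n) ℂ) (f : Fin n → ZMod h)

lemma Bprod_zero (i : ZMod h) : Bprod A f i 0 = 1 := rfl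

lemma Bprod_eq_prod_range (i : ZMod h) (p : ℕ) :
    Bprod A f i p = ((List.range p).map fun j : ℕ => blockM A f (i - p + j)).prod := by
  simp [Bprod, ← List.map_eq_flatMap, Function.comp_def]

lemma Bprod_succ (i : ZMod h) (q : ℕ) :
    Bprod A f i (q + 1) = blockM A f (i - (q + 1 : ℕ)) * Bprod A f i q := by
  simp only [Bprod_eq_prod_range, List.range_succ_eq_map, List.map_cons, List.prod_cons,
    List.map_map, Function.comp_def]
  push_cast
  ring_nf

variable {A f}

lemma blockM_mulVec_apply_of_ne (ℓ : ZMod h) (u : Fin n → ℂ) {x : Fin n} (hx : f x ≠ ℓ) :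
    (blockM A f ℓ *ᵥ u) x = 0 := by
  simp [mulVec, dotProduct, blockM, hx]

lemma IsHCyclic.mulVec_eq_blockM_mulVec (hA : IsHCyclic A f) {ℓ : ZMod h} {u : Fin n → ℂ}
    (hu : ∀ y, f y ≠ ℓ + 1 → u y = 0) : A *ᵥ u = blockM A f ℓ *ᵥ u := by
  ext x
  simp only [mulVec, dotProduct]
  refine Finset.sum_congr rfl fun y _ => ?_
  by_cases hy : f y = ℓ + 1
  · by_cases hxy : A x y = 0
    · simp [blockM, hxy]
    · have hx : f x = ℓ := add_right_cancel ((hy ▸ hA x y hxy).symm)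
      simp [blockM, hx, hy]
  · simp [hu y hy]

lemma Bprod_mulVec_apply_of_ne {i : ZMod h} {v : Fin n → ℂ} (hv : ∀ y, f y ≠ i → v y = 0)
    (q : ℕ) {x : Fin n} (hx : f x ≠ i - q) : (Bprod A f i q *ᵥ v) x = 0 := by
  cases q with
  | zero => simpa [Bprod_zero] using hv x (by simpa using hx)
  | succ q => rw [Bprod_succ, ← mulVec_mulVec]; exact blockM_mulVec_apply_of_ne _ _ hx

lemma IsHCyclic.Bprod_mulVec_eq_iterate (hA : IsHCyclic A f) {i : ZMod h} {v : Fin n → ℂ}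
    (hv : ∀ y, f y ≠ i → v y = 0) (q : ℕ) : Bprod A f i q *ᵥ v = (A *ᵥ ·)^[q] v := by
  induction q with
  | zero => simp [Bprod_zero]
  | succ q ih =>
    have hblock : i - ((q + 1 : ℕ) : ZMod h) + 1 = i - q := by push_cast; ring
    have hsupp : ∀ y, f y ≠ i - (q + 1 : ℕ) + 1 → (Bprod A f i q *ᵥ v) y = 0 := fun y hy =>
      Bprod_mulVec_apply_of_ne hv q (hblock ▸ hy)
    rw [Function.iterate_succ_apply', ← ih, Bprod_succ, ← mulVec_mulVec,
      hA.mulVec_eq_blockM_mulVec hsupp]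

lemma Function.exists_chain_of_iterate_eq_zero {α : Type*} [Zero α] (T : α → α) {x : α}
    {m : ℕ} (hx : x ≠ 0) (hm : T^[m] x = 0) :
    ∃ p, 0 < p ∧ p ≤ m ∧ T^[p] x = 0 ∧ (∀ q, 0 < q → q < p → T^[q] x ≠ 0) ∧
      ∃ w : ℕ → α, w 0 ≠ 0 ∧ T (w 0) = 0 ∧ ∀ k, k + 1 < p → T (w (k + 1)) = w k := by
  classical
  have hex : ∃ p, T^[p] x = 0 := ⟨m, hm⟩
  set p := Nat.find hex
  have hp : T^[p] x = 0 := Nat.find_spec hex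
  have hpos : 0 < p := Nat.pos_of_ne_zero fun h0 => hx (by rwa [h0] at hp)
  have hmin : ∀ q < p, T^[q] x ≠ 0 := fun q => Nat.find_min hex
  refine ⟨p, hpos, Nat.find_le hm, hp, fun q _ hq => hmin q hq,
    fun k => T^[p - 1 - k] x, hmin _ (by omega), ?_, fun k hk => ?_⟩
  · rwa [← Function.iterate_succ_apply' T, show (p - 1 - 0).succ = p by omega]
  · rw [← Function.iterate_succ_apply' T, show (p - 1 - (k + 1)).succ = p - 1 - k by omega]

end

theorem zero_jordan_chain_general {n h : ℕ} (A : Matrix (Fin n) (Fin n) ℂ)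
    (f : Fin n → ZMod h)
    (hA : IsHCyclic A f) (i : ZMod h) (v : Fin n → ℂ)
    (hv : ∀ y, f y ≠ i → v y = 0) (hv0 : v ≠ 0)
    (hnull : Bprod A f i h *ᵥ v = 0) :
    ∃ p, 0 < p ∧ p ≤ h ∧ Bprod A f i p *ᵥ v = 0 ∧
      (∀ q, 0 < q → q < p → Bprod A f i q *ᵥ v ≠ 0) ∧
      ∃ w : ℕ → Fin n → ℂ, w 0 ≠ 0 ∧ A *ᵥ w 0 = 0 ∧
        ∀ k, k + 1 < p → A *ᵥ w (k + 1) = w k := by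
  simp only [hA.Bprod_mulVec_eq_iterate hv] at hnull ⊢
  exact Function.exists_chain_of_iterate_eq_zero _ hv0 hnull

/-- If `A` is `h`-cyclic in consecutive block form and `x ∈ null(B_i)`, `x ≠ 0` (encoded as
the block vector `v` supported on block `i` with `B_{ih} v = 0`), then there is a positive
integer `p ≤ h` with `B_{ip} x = 0` and `B_{iq} x ≠ 0` for `1 ≤ q < p`; moreover `A` has a
Jordan chain of length `p` for the eigenvalue `0`. -/
theorem zero_jordan_chain {n h : ℕ} [NeZero h] (A : Matrix (Fin n) (Fin n) ℂ)
    (f : Fin n → ZMod h) (hcons : Monotone fun x : Fin n => (f x).val)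
    (hA : IsHCyclic A f) (i : ZMod h) (v : Fin n → ℂ)
    (hv : ∀ y, f y ≠ i → v y = 0) (hv0 : v ≠ 0)
    (hnull : Bprod A f i h *ᵥ v = 0) :
    ∃ p, 0 < p ∧ p ≤ h ∧ Bprod A f i p *ᵥ v = 0 ∧
      (∀ q, 0 < q → q < p → Bprod A f i q *ᵥ v ≠ 0) ∧
      ∃ w : ℕ → Fin n → ℂ, w 0 ≠ 0 ∧ A *ᵥ w 0 = 0 ∧
        ∀ k, k + 1 < p → A *ᵥ w (k + 1) = w k :=
  zero_jordan_chain_general A f hA i v hv hv0 hnull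
end

section
/- Let A ∈ M_n(ℂ) be h-cyclic in consecutive block form with partition V_1,...,V_h. If {x_1, ..., x_p} is a Jordan chain of A corresponding to the eigenvalue λ, and each x_j is partitioned conformably into blocks x_{1j}, ..., x_{hj}, then for each k ∈ {0,...,h-1} the vectors x̂_j with i-th block (ω^k)^{(i-j) mod h} x_{ij} form a Jordan chain of A corresponding to the eigenvalue λω^k, where ω = exp(2πi/h). -/
open Matrix

/-- `ω = exp(2πi/h)`, a primitive `h`-th root of unity. -/
noncomputable def primRoot (h : ℕ) : ℂ := Complex.exp (2 * Real.pi * Complex.I / h)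

/-- The scaled chain: the block-`i` part of the `j`-th vector is multiplied by
`c^{(i-j) mod h}` (with `c = ω^k`), i.e. `x̂_j y = c^{(f y - j) mod h} · x_j y`. -/
noncomputable def rscale {n h : ℕ} (f : Fin n → ZMod h) (c : ℂ)
    (x : ℕ → Fin n → ℂ) : ℕ → Fin n → ℂ :=
  fun j y => c ^ (f y - (j : ZMod h)).val * x j y

lemma primRoot_pow_self (h : ℕ) [NeZero h] : primRoot h ^ h = 1 := by
  rw [primRoot, ← Complex.exp_nat_mul, mul_comm,
    div_mul_cancel₀ _ (by exact_mod_cast NeZero.ne h : (h : ℂ) ≠ 0),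
    Complex.exp_two_pi_mul_I]

lemma pow_val_of_cast_eq {h : ℕ} [NeZero h] (c : ℂ) (hc : c ^ h = 1) (m : ℕ) (b : ZMod h)
    (hb : (m : ZMod h) = b) : c ^ m = c ^ b.val := by
  have h1 : b.val = m % h := by rw [← hb, ZMod.val_natCast]
  conv_lhs => rw [← Nat.div_add_mod m h]
  rw [pow_add, pow_mul, hc, one_pow, one_mul, h1]

lemma key {h : ℕ} [NeZero h] (c : ℂ) (hc : c ^ h = 1) (a : ZMod h) :
    c ^ (a + 1).val = c * c ^ a.val := by
  have := pow_val_of_cast_eq c hc (a.val + 1) (a + 1) (by push_cast [ZMod.natCast_val, ZMod.cast_id]; ring)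
  rw [← this, pow_succ, mul_comm]

lemma mulVec_rscale {n h : ℕ} [NeZero h] (A : Matrix (Fin n) (Fin n) ℂ)
    (f : Fin n → ZMod h) (hA : IsHCyclic A f) (c : ℂ) (hc : c ^ h = 1)
    (x : ℕ → Fin n → ℂ) (j : ℕ) :
    A *ᵥ rscale f c x j = fun y => c * c ^ (f y - (j : ZMod h)).val * (A *ᵥ x j) y := by
  funext y
  simp only [mulVec, dotProduct, rscale, Finset.mul_sum]
  refine Finset.sum_congr rfl fun z _ => ?_
  by_cases hz : A y z = 0
  · simp [hz]
  · rw [hA y z hz, show f y + 1 - (j : ZMod h) = (f y - j) + 1 by ring, key c hc]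
    ring

/-- If `{x_0, …, x_{p-1}}` is a (right) Jordan chain of the `h`-cyclic matrix `A` for the
eigenvalue `λ`, then for each `k < h` the scaled vectors `x̂_j`, whose block-`i` component is
`(ω^k)^{(i-j) mod h} x_{ij}`, form a Jordan chain of `A` for the eigenvalue `λ ω^k`. -/
theorem scaled_right_jordan_chain {n h : ℕ} [NeZero h] (A : Matrix (Fin n) (Fin n) ℂ)
    (f : Fin n → ZMod h) (hcons : Monotone fun x : Fin n => (f x).val)
    (hA : IsHCyclic A f) (lam : ℂ) (p : ℕ) (hp : 0 < p) (x : ℕ → Fin n → ℂ)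
    (hx0 : x 0 ≠ 0) (hx1 : A *ᵥ x 0 = lam • x 0)
    (hxj : ∀ j, 0 < j → j < p → A *ᵥ x j = lam • x j + x (j - 1))
    (k : ℕ) (hk : k < h) :
    rscale f (primRoot h ^ k) x 0 ≠ 0 ∧
    A *ᵥ rscale f (primRoot h ^ k) x 0 = (lam * primRoot h ^ k) • rscale f (primRoot h ^ k) x 0 ∧
    ∀ j, 0 < j → j < p →
      A *ᵥ rscale f (primRoot h ^ k) x j
        = (lam * primRoot h ^ k) • rscale f (primRoot h ^ k) x j
          + rscale f (primRoot h ^ k) x (j - 1) := by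
  set c : ℂ := primRoot h ^ k with hcdef
  have hc : c ^ h = 1 := by
    rw [hcdef, ← pow_mul, mul_comm, pow_mul, primRoot_pow_self, one_pow]
  have hcne : c ≠ 0 := pow_ne_zero _ (Complex.exp_ne_zero _)
  refine ⟨?_, ?_, ?_⟩
  · intro hcontra
    apply hx0
    funext y
    have := congrFun hcontra y
    simp only [rscale, Pi.zero_apply, mul_eq_zero] at this ⊢
    rcases this with h1 | h1
    · exact absurd h1 (pow_ne_zero _ hcne)
    · exact h1
  · rw [mulVec_rscale A f hA c hc]
    funext y
    simp only [rscale, Pi.smul_apply, smul_eq_mul, hx1, Pi.smul_apply, smul_eq_mul]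
    ring
  · intro j hj hjp
    rw [mulVec_rscale A f hA c hc]
    funext y
    have hcast : ((j - 1 : ℕ) : ZMod h) = (j : ZMod h) - 1 := by
      push_cast [Nat.cast_sub hj]
      ring
    have hkey : c ^ (f y - ((j - 1 : ℕ) : ZMod h)).val = c * c ^ (f y - (j : ZMod h)).val := by
      rw [hcast, show f y - ((j : ZMod h) - 1) = (f y - j) + 1 by ring, key c hc]
    simp only [rscale, Pi.add_apply, Pi.smul_apply, smul_eq_mul, hxj j hj hjp, Pi.add_apply,
      Pi.smul_apply, smul_eq_mul, hkey]
    ring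
end

section
/- If A ∈ M_n(ℂ) is a matrix whose Jordan canonical form consists, for each nonzero eigenvalue, of blocks J_p(λ) appearing with the same multiplicity as J_p(λω^k) for every k ∈ {0,...,h-1}, obtained via right eigenvector transformations x ↦ (blocks scaled by powers (ω^k)^{(i-j) mod h}) and left eigenvector transformations y ↦ (blocks scaled by (ω^k)^{(j-i) mod h}) with respect to a partition P = {V_1,...,V_h} of {1,...,n} (i.e., both conditions (i) and (ii) of the Jordan-chain hypothesis hold for all eigenvalues), then A is h-cyclic with partition P. -/
open Matrix

/-- `x_0, …, x_{p-1}` is a right Jordan chain of `A` for the eigenvalue `lam`. -/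
def IsRightChain {n : ℕ} (A : Matrix (Fin n) (Fin n) ℂ) (lam : ℂ) (p : ℕ)
    (x : ℕ → Fin n → ℂ) : Prop :=
  x 0 ≠ 0 ∧ A *ᵥ x 0 = lam • x 0 ∧
    ∀ j, 0 < j → j < p → A *ᵥ x j = lam • x j + x (j - 1)

/-- `y_0, …, y_{p-1}` is a left Jordan chain of `A` for the eigenvalue `lam`. -/
def IsLeftChain {n : ℕ} (A : Matrix (Fin n) (Fin n) ℂ) (lam : ℂ) (p : ℕ)
    (y : ℕ → Fin n → ℂ) : Prop :=
  y 0 ≠ 0 ∧ y 0 ᵥ* A = lam • y 0 ∧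
    ∀ j, 0 < j → j < p → y j ᵥ* A = lam • y j + y (j - 1)

/-- Left scaling: `ŷ_j` has block-`i` component `c^{(j-i) mod h} y_{ji}`. -/
noncomputable def lscale {n h : ℕ} (f : Fin n → ZMod h) (c : ℂ)
    (y : ℕ → Fin n → ℂ) : ℕ → Fin n → ℂ :=
  fun j i => c ^ ((j : ZMod h) - f i).val * y j i

/-!
Let `D` be the diagonal matrix acting by `ω ^ a` on the coordinates of block `a`. The
`ω`-scaling of a right Jordan chain `x` is `j ↦ ω⁻ʲ D x_j`, so condition (i) with `k = 1`
yields `A D x_j = ω D A x_j` along every Jordan chain. Jordan chains span `ℂⁿ`, hence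
`A D = ω D A`, i.e. `A i j ω ^ f j = ω ^ (f i + 1) A i j`; as `ω` is a primitive `h`-th root
of unity, `A i j ≠ 0` forces `f j = f i + 1`.
-/

section BlockScaling

variable {n h : ℕ} {ζ : ℂ}

theorem pow_val_add_of_pow_eq_one [NeZero h] (hζ : ζ ^ h = 1) (a b : ZMod h) :
    ζ ^ (a + b).val = ζ ^ a.val * ζ ^ b.val := by
  rw [ZMod.val_add, ← pow_eq_pow_mod _ hζ, pow_add]

theorem pow_val_natCast_of_pow_eq_one (hζ : ζ ^ h = 1) (m : ℕ) :
    ζ ^ (m : ZMod h).val = ζ ^ m := by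
  rw [ZMod.val_natCast, ← pow_eq_pow_mod _ hζ]

theorem IsPrimitiveRoot.pow_val_injective [NeZero h] (hζ : IsPrimitiveRoot ζ h) :
    Function.Injective fun a : ZMod h => ζ ^ a.val := fun a b hab =>
  ZMod.val_injective h (hζ.pow_inj (ZMod.val_lt a) (ZMod.val_lt b) hab)

theorem isPrimitiveRoot_primRoot [NeZero h] : IsPrimitiveRoot (primRoot h) h :=
  Complex.isPrimitiveRoot_exp h (NeZero.ne h)

noncomputable def blockScaling (f : Fin n → ZMod h) (ζ : ℂ) : Matrix (Fin n) (Fin n) ℂ :=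
  diagonal fun y => ζ ^ (f y).val

theorem pow_smul_rscale [NeZero h] (hζ : ζ ^ h = 1) (f : Fin n → ZMod h) (x : ℕ → Fin n → ℂ)
    (j : ℕ) : ζ ^ j • rscale f ζ x j = blockScaling f ζ *ᵥ x j := by
  ext y
  rw [blockScaling, mulVec_diagonal, Pi.smul_apply, smul_eq_mul, rscale, ← mul_assoc,
    ← pow_val_natCast_of_pow_eq_one hζ, ← pow_val_add_of_pow_eq_one hζ, add_sub_cancel]

theorem isHCyclic_of_mul_blockScaling [NeZero h] {A : Matrix (Fin n) (Fin n) ℂ}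
    {f : Fin n → ZMod h} (hζ : IsPrimitiveRoot ζ h)
    (hA : A * blockScaling f ζ = ζ • (blockScaling f ζ * A)) : IsHCyclic A f := by
  intro i j hij
  have hentry := congrFun (congrFun hA i) j
  rw [Matrix.smul_apply, blockScaling, mul_diagonal, diagonal_mul, smul_eq_mul] at hentry
  apply hζ.pow_val_injective
  calc ζ ^ (f j).val = ζ * ζ ^ (f i).val := by
        rw [mul_comm (A i j), ← mul_assoc] at hentry
        exact mul_right_cancel₀ hij hentry
    _ = ζ ^ (f i + 1).val := by
        rw [pow_val_add_of_pow_eq_one hζ.pow_eq_one, ← Nat.cast_one,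
          pow_val_natCast_of_pow_eq_one hζ.pow_eq_one, pow_one, mul_comm]

end BlockScaling

section JordanChains

variable {n : ℕ} {A : Matrix (Fin n) (Fin n) ℂ}

theorem isRightChain_pow_sub_apply {μ : ℂ} {q : ℕ} {v : Fin n → ℂ}
    (hv : ((mulVecLin A - μ • 1) ^ (q + 1)) v = 0) (hq : ((mulVecLin A - μ • 1) ^ q) v ≠ 0) :
    IsRightChain A μ (q + 1) fun j => ((mulVecLin A - μ • 1) ^ (q - j)) v := by
  set N := mulVecLin A - μ • 1
  have hA : ∀ w, A *ᵥ w = μ • w + N w := fun w => by simp [N]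
  refine ⟨hq, ?_, fun j hj0 hjq => ?_⟩
  · dsimp only
    rw [hA, Nat.sub_zero, ← Module.End.mul_apply, ← pow_succ', hv, add_zero]
  · dsimp only
    rw [hA, ← Module.End.mul_apply, ← pow_succ', show q - j + 1 = q - (j - 1) by omega]

variable {h : ℕ} [NeZero h] {f : Fin n → ZMod h} {ζ : ℂ}

theorem mulVec_blockScaling_chain (hζ : ζ ^ h = 1) {μ : ℂ} {p : ℕ} {x : ℕ → Fin n → ℂ}
    (hx : IsRightChain A μ p x) (hx' : IsRightChain A (μ * ζ) p (rscale f ζ x)) {j : ℕ}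
    (hj : j < p) :
    A *ᵥ (blockScaling f ζ *ᵥ x j) = ζ • (blockScaling f ζ *ᵥ (A *ᵥ x j)) := by
  rcases j with _ | j
  · rw [← pow_smul_rscale hζ, pow_zero, one_smul, hx'.2.1, hx.2.1, mulVec_smul,
      ← pow_smul_rscale hζ, pow_zero, one_smul, smul_smul, mul_comm]
  · have hrel := hx'.2.2 (j + 1) j.succ_pos hj
    rw [Nat.add_sub_cancel] at hrel
    rw [← pow_smul_rscale hζ, mulVec_smul, hrel, hx.2.2 (j + 1) j.succ_pos hj, Nat.add_sub_cancel,
      mulVec_add, mulVec_smul, ← pow_smul_rscale hζ, ← pow_smul_rscale hζ, pow_succ]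
    module

theorem mulVec_blockScaling_of_mem_maxGenEigenspace (hζ : ζ ^ h = 1)
    (hchain : ∀ μ p x, IsRightChain A μ p x → IsRightChain A (μ * ζ) p (rscale f ζ x))
    {μ : ℂ} {v : Fin n → ℂ} (hv : v ∈ Module.End.maxGenEigenspace (mulVecLin A) μ) :
    A *ᵥ (blockScaling f ζ *ᵥ v) = ζ • (blockScaling f ζ *ᵥ (A *ᵥ v)) := by
  obtain ⟨q, hq⟩ := (Module.End.mem_maxGenEigenspace _ _ _).mp hv
  induction q generalizing v with
  | zero =>
    rw [pow_zero, Module.End.one_apply] at hq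
    simp [hq]
  | succ q ih =>
    by_cases hq' : ((mulVecLin A - μ • 1) ^ q) v = 0
    · exact ih ((Module.End.mem_maxGenEigenspace _ _ _).mpr ⟨q, hq'⟩) hq'
    have hx := isRightChain_pow_sub_apply hq hq'
    simpa using mulVec_blockScaling_chain hζ hx (hchain μ _ _ hx) q.lt_succ_self

theorem mul_blockScaling_eq (hζ : ζ ^ h = 1)
    (hchain : ∀ μ p x, IsRightChain A μ p x → IsRightChain A (μ * ζ) p (rscale f ζ x)) :
    A * blockScaling f ζ = ζ • (blockScaling f ζ * A) := by
  rw [← sub_eq_zero, ← Matrix.toLin'.map_eq_zero_iff, ← LinearMap.ker_eq_top, eq_top_iff,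
    ← Module.End.iSup_maxGenEigenspace_eq_top (mulVecLin A)]
  refine iSup_le fun μ v hv => ?_
  rw [LinearMap.mem_ker, toLin'_apply, sub_mulVec, smul_mulVec, ← mulVec_mulVec, ← mulVec_mulVec,
    mulVec_blockScaling_of_mem_maxGenEigenspace hζ hchain hv, sub_self]

end JordanChains

theorem hcyclic_of_chain_symmetry_general {n h : ℕ} [NeZero h] (A : Matrix (Fin n) (Fin n) ℂ)
    (f : Fin n → ZMod h)
    (hright : ∀ (lam : ℂ) (p : ℕ) (x : ℕ → Fin n → ℂ), IsRightChain A lam p x →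
      ∀ k, k < h → IsRightChain A (lam * primRoot h ^ k) p (rscale f (primRoot h ^ k) x)) :
    IsHCyclic A f := by
  have hω : IsPrimitiveRoot (primRoot h) h := isPrimitiveRoot_primRoot
  -- `k = 1 % h` rather than `k = 1`, so that `h = 1` needs no separate treatment.
  have hchain : ∀ μ p x, IsRightChain A μ p x →
      IsRightChain A (μ * primRoot h) p (rscale f (primRoot h) x) := fun μ p x hx => by
    simpa only [← pow_eq_pow_mod 1 hω.pow_eq_one, pow_one] using
      hright μ p x hx (1 % h) (Nat.mod_lt 1 (NeZero.pos h))
  exact isHCyclic_of_mul_blockScaling hω (mul_blockScaling_eq hω.pow_eq_one hchain)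

/-- If every right Jordan chain of `A` transforms, for every `k < h`, under the
`ω^k`-block-scaling into a right Jordan chain for `λω^k` (condition (i)), and likewise
every left Jordan chain (condition (ii)), then `A` is `h`-cyclic with partition `f`. -/
theorem hcyclic_of_chain_symmetry {n h : ℕ} [NeZero h] (A : Matrix (Fin n) (Fin n) ℂ)
    (f : Fin n → ZMod h)
    (hright : ∀ (lam : ℂ) (p : ℕ) (x : ℕ → Fin n → ℂ), IsRightChain A lam p x →
      ∀ k, k < h → IsRightChain A (lam * primRoot h ^ k) p (rscale f (primRoot h ^ k) x))
    (hleft : ∀ (lam : ℂ) (p : ℕ) (y : ℕ → Fin n → ℂ), IsLeftChain A lam p y →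
      ∀ k, k < h → IsLeftChain A (lam * primRoot h ^ k) p (lscale f (primRoot h ^ k) y)) :
    IsHCyclic A f :=
  hcyclic_of_chain_symmetry_general A f hright
end
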